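/- (Final size lower bound.) Suppose R₀ = Nδ < 1 and the initial condition satisfies I(0) = (I⁰, 0, …, 0) with I⁰ > 0 and S(0) + I⁰ ≤ N, S(0) > 0. Then S∞ ≥ S(0)·(1 − δ(S(0)+I⁰))/(1 − δS(0)) > 0. -/

import Mathlib

open Filter Topology

/-- The set of admissible infected-population vectors when the total population is `N`. -/
def stateSet (n : ℕ) (N : ℝ) : Set (Fin n → ℝ) :=
  {I | (∀ j, 0 ≤ I j) ∧ ∑ j, I j ≤ N}

/-- Hypothesis (H) on the incidence function `φ`: it is C², vanishes at `0`, takes values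
in `[0,1)` on the admissible set, has nonnegative gradient there, its partial derivative
with respect to the last class at `0` is positive, and it is concave (down). -/
def HypH (n : ℕ) (N : ℝ) (φ : (Fin n → ℝ) → ℝ) : Prop :=
  ContDiff ℝ 2 φ ∧ φ 0 = 0 ∧
  (∀ I ∈ stateSet n N, 0 ≤ φ I ∧ φ I < 1) ∧
  (∀ I ∈ stateSet n N, ∀ j, 0 ≤ fderiv ℝ φ I (Pi.single j 1)) ∧
  (∀ h : 0 < n, 0 < fderiv ℝ φ 0 (Pi.single (⟨n - 1, Nat.sub_lt h Nat.one_pos⟩ : Fin n) 1)) ∧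
  ConcaveOn ℝ (stateSet n N) φ

/-- The discrete-time staged progression epidemic system:
`S(t+1) = (1−φ(I(t)))S(t)`, `I₁(t+1) = (1−γ₁)I₁(t) + φ(I(t))S(t)`,
`Iⱼ(t+1) = (1−γⱼ)Iⱼ(t) + γⱼ₋₁Iⱼ₋₁(t)` for `2 ≤ j ≤ n`. -/
def SPSystem {n : ℕ} (γ : Fin n → ℝ) (φ : (Fin n → ℝ) → ℝ)
    (S : ℕ → ℝ) (I : ℕ → Fin n → ℝ) : Prop :=
  (∀ t, S (t + 1) = (1 - φ (I t)) * S t) ∧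
  (∀ t, ∀ h0 : 0 < n, I (t + 1) ⟨0, h0⟩ = (1 - γ ⟨0, h0⟩) * I t ⟨0, h0⟩ + φ (I t) * S t) ∧
  (∀ t, ∀ j : Fin n, ∀ h : j.val + 1 < n,
    I (t + 1) ⟨j.val + 1, h⟩ = (1 - γ ⟨j.val + 1, h⟩) * I t ⟨j.val + 1, h⟩ + γ j * I t j)

/-- Admissible initial condition: `S(0) > 0`, `I(0) ≥ 0`, `I(0) ≠ 0`, `S(0)+‖I(0)‖₁ ≤ N`. -/
def AdmissibleIC {n : ℕ} (N : ℝ) (S : ℕ → ℝ) (I : ℕ → Fin n → ℝ) : Prop :=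
  0 < S 0 ∧ (∀ j, 0 ≤ I 0 j) ∧ I 0 ≠ 0 ∧ S 0 + ∑ j, I 0 j ≤ N

/-!
`S(T) = S(0) ∏_{t<T} (1 − φ(I(t))) ≥ S(0) (1 − ∑_{t<T} φ(I(t)))`. Concavity gives
`φ(I) ≤ r · I` with `r = ∇φ(0)`, and the flux balance through the stages bounds
`γⱼ ∑_{t<T} Iⱼ(t)` by `I⁰ + S(0) − S(T)`, so `∑_{t<T} φ(I(t)) ≤ δ (I⁰ + S(0) − S(T))`.
Hence `S(T) (1 − δ S(0)) ≥ S(0) (1 − δ (S(0) + I⁰))` for every `T`, and `T → ∞` gives the bound.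
All of this needs the orbit to stay in the state set, which holds because the updates
preserve nonnegativity and the total population `S + ∑ⱼ Iⱼ` never increases.
-/

open Finset

theorem one_sub_sum_le_prod_one_sub {ι : Type*} (s : Finset ι) {a : ι → ℝ}
    (h0 : ∀ i ∈ s, 0 ≤ a i) (h1 : ∀ i ∈ s, a i ≤ 1) :
    1 - ∑ i ∈ s, a i ≤ ∏ i ∈ s, (1 - a i) := by
  classical
  induction s using Finset.induction_on with
  | empty => simp
  | insert i s hi ih =>
    rw [sum_insert hi, prod_insert hi]
    have ih := ih (fun j hj => h0 j (mem_insert_of_mem hj))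
      (fun j hj => h1 j (mem_insert_of_mem hj))
    have hs : 0 ≤ ∑ j ∈ s, a j := sum_nonneg fun j hj => h0 j (mem_insert_of_mem hj)
    have hai := h0 i (mem_insert_self i s)
    calc 1 - (a i + ∑ j ∈ s, a j)
        ≤ (1 - a i) * (1 - ∑ j ∈ s, a j) := by nlinarith [mul_nonneg hai hs]
      _ ≤ (1 - a i) * ∏ j ∈ s, (1 - a j) :=
          mul_le_mul_of_nonneg_left ih (sub_nonneg.2 (h1 i (mem_insert_self i s)))

theorem ConcaveOn.le_add_fderiv {E : Type*} [NormedAddCommGroup E] [NormedSpace ℝ E]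
    {s : Set E} {f : E → ℝ} (hf : ConcaveOn ℝ s f) {x y : E} (hx : x ∈ s) (hy : y ∈ s)
    (hd : DifferentiableAt ℝ f y) : f x ≤ f y + fderiv ℝ f y (x - y) := by
  let ℓ : ℝ →ᵃ[ℝ] E := AffineMap.lineMap y x
  have hf' : HasFDerivAt f (fderiv ℝ f y) (ℓ 0) := by simpa [ℓ] using hd.hasFDerivAt
  have hslope := (hf.comp_affineMap ℓ).slope_le_of_hasDerivAt (by simpa [ℓ] using hy)
    (by simpa [ℓ] using hx) one_pos (hf'.comp_hasDerivAt 0 AffineMap.hasDerivAt_lineMap)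
  simp only [slope_def_field, Function.comp_apply, ℓ, AffineMap.lineMap_apply_zero,
    AffineMap.lineMap_apply_one, sub_zero, div_one] at hslope
  linarith

theorem mul_sum_range_add_eq_of_recurrence {R : Type*} [CommRing R] {x u : ℕ → R} {g : R}
    (h : ∀ t, x (t + 1) = (1 - g) * x t + u t) (T : ℕ) :
    g * ∑ t ∈ range T, x t + x T = x 0 + ∑ t ∈ range T, u t := by
  induction T with
  | zero => simp
  | succ T ih =>
    rw [sum_range_succ, sum_range_succ, h T]
    linear_combination ih

theorem sum_range_le_of_le_sum_mul {ι : Type*} [Fintype ι] {a : ℕ → ℝ} {x : ℕ → ι → ℝ}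
    {r γ : ι → ℝ} {C : ℝ} {T : ℕ} (hr : ∀ j, 0 ≤ r j) (hγ : ∀ j, 0 < γ j)
    (ha : ∀ t, a t ≤ ∑ j, r j * x t j) (hx : ∀ j, γ j * ∑ t ∈ range T, x t j ≤ C) :
    ∑ t ∈ range T, a t ≤ (∑ j, r j / γ j) * C := by
  calc ∑ t ∈ range T, a t
      ≤ ∑ t ∈ range T, ∑ j, r j * x t j := sum_le_sum fun t _ => ha t
    _ = ∑ j, r j / γ j * (γ j * ∑ t ∈ range T, x t j) := by
        rw [sum_comm]
        refine sum_congr rfl fun j _ => ?_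
        rw [← mul_sum]
        field_simp [(hγ j).ne']
    _ ≤ ∑ j, r j / γ j * C :=
        sum_le_sum fun j _ => mul_le_mul_of_nonneg_left (hx j) (div_nonneg (hr j) (hγ j).le)
    _ = (∑ j, r j / γ j) * C := (sum_mul _ _ _).symm

namespace SPSystem

variable {m : ℕ} {γ : Fin (m + 1) → ℝ} {φ : (Fin (m + 1) → ℝ) → ℝ} {S : ℕ → ℝ}
  {I : ℕ → Fin (m + 1) → ℝ}

theorem S_succ (h : SPSystem γ φ S I) (t : ℕ) : S (t + 1) = (1 - φ (I t)) * S t :=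
  h.1 t

theorem I_succ_zero (h : SPSystem γ φ S I) (t : ℕ) :
    I (t + 1) 0 = (1 - γ 0) * I t 0 + φ (I t) * S t :=
  h.2.1 t m.succ_pos

theorem I_succ_succ (h : SPSystem γ φ S I) (t : ℕ) (k : Fin m) :
    I (t + 1) k.succ = (1 - γ k.succ) * I t k.succ + γ k.castSucc * I t k.castSucc :=
  h.2.2 t k.castSucc (by simp)

theorem S_eq_mul_prod (h : SPSystem γ φ S I) (T : ℕ) :
    S T = S 0 * ∏ t ∈ range T, (1 - φ (I t)) := by
  induction T with
  | zero => simp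
  | succ T ih => rw [prod_range_succ, h.S_succ, ih]; ring

theorem S_add_sum_incidence (h : SPSystem γ φ S I) (T : ℕ) :
    S T + ∑ t ∈ range T, φ (I t) * S t = S 0 := by
  induction T with
  | zero => simp
  | succ T ih => rw [sum_range_succ, h.S_succ]; linear_combination ih

theorem total_succ (h : SPSystem γ φ S I) (t : ℕ) :
    S (t + 1) + ∑ j, I (t + 1) j
      = S t + ∑ j, I t j - γ (Fin.last m) * I t (Fin.last m) := by
  have hflow : ∑ j, γ j * I t j
      = γ 0 * I t 0 + ∑ k : Fin m, γ k.succ * I t k.succ := Fin.sum_univ_succ _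
  have hout : ∑ j, γ j * I t j
      = ∑ k : Fin m, γ k.castSucc * I t k.castSucc + γ (Fin.last m) * I t (Fin.last m) :=
    Fin.sum_univ_castSucc _
  simp only [Fin.sum_univ_succ (f := fun j => I _ j), h.S_succ, h.I_succ_zero,
    h.I_succ_succ, sum_add_distrib, sub_mul, one_mul, sum_sub_distrib]
  linear_combination hflow - hout

theorem nonneg_and_total_le (h : SPSystem γ φ S I) {N : ℝ} (hγ : ∀ j, γ j ∈ Set.Icc 0 1)
    (hφ : ∀ x ∈ stateSet (m + 1) N, φ x ∈ Set.Icc 0 1) (hS0 : 0 ≤ S 0) (hI0 : ∀ j, 0 ≤ I 0 j)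
    (hN0 : S 0 + ∑ j, I 0 j ≤ N) (t : ℕ) :
    0 ≤ S t ∧ (∀ j, 0 ≤ I t j) ∧ S t + ∑ j, I t j ≤ N := by
  induction t with
  | zero => exact ⟨hS0, hI0, hN0⟩
  | succ t ih =>
    obtain ⟨hSt, hIt, hNt⟩ := ih
    have hφt := hφ (I t) ⟨hIt, by linarith⟩
    refine ⟨?_, fun j => ?_, ?_⟩
    · rw [h.S_succ]
      exact mul_nonneg (sub_nonneg.2 hφt.2) hSt
    · cases j using Fin.cases with
      | zero =>
        rw [h.I_succ_zero]
        exact add_nonneg (mul_nonneg (sub_nonneg.2 (hγ 0).2) (hIt 0)) (mul_nonneg hφt.1 hSt)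
      | succ k =>
        rw [h.I_succ_succ]
        exact add_nonneg (mul_nonneg (sub_nonneg.2 (hγ _).2) (hIt _))
          (mul_nonneg (hγ _).1 (hIt _))
    · rw [h.total_succ]
      linarith [mul_nonneg (hγ (Fin.last m)).1 (hIt (Fin.last m))]

/-- Flux balance: whoever enters class `j` before time `T` was either infected at time `0` or
left `S` before `T`. -/
theorem gamma_mul_sum_le (h : SPSystem γ φ S I) (hI : ∀ t j, 0 ≤ I t j)
    (hrest : ∀ k : Fin m, I 0 k.succ = 0) (T : ℕ) (j : Fin (m + 1)) :
    γ j * ∑ t ∈ range T, I t j ≤ I 0 0 + (S 0 - S T) := by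
  induction j using Fin.induction with
  | zero =>
    have := mul_sum_range_add_eq_of_recurrence (x := fun t => I t 0) h.I_succ_zero T
    linarith [h.S_add_sum_incidence T, hI T 0]
  | succ k ih =>
    have := mul_sum_range_add_eq_of_recurrence (x := fun t => I t k.succ)
      (u := fun t => γ k.castSucc * I t k.castSucc) (h.I_succ_succ · k) T
    rw [← mul_sum] at this
    linarith [hrest k, hI T k.succ]

theorem le_S_of_le_linear (h : SPSystem γ φ S I) (hφ : ∀ t, φ (I t) ∈ Set.Icc 0 1)
    (hS0 : 0 ≤ S 0) (hγ : ∀ j, 0 < γ j) (hI : ∀ t j, 0 ≤ I t j)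
    (hrest : ∀ k : Fin m, I 0 k.succ = 0) {r : Fin (m + 1) → ℝ} (hr : ∀ j, 0 ≤ r j)
    (hφr : ∀ t, φ (I t) ≤ ∑ j, r j * I t j) (T : ℕ) :
    S 0 * (1 - (∑ j, r j / γ j) * (I 0 0 + (S 0 - S T))) ≤ S T := by
  have hsum := sum_range_le_of_le_sum_mul hr hγ hφr (h.gamma_mul_sum_le hI hrest T)
  calc S 0 * (1 - (∑ j, r j / γ j) * (I 0 0 + (S 0 - S T)))
      ≤ S 0 * (1 - ∑ t ∈ range T, φ (I t)) := by gcongr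
    _ ≤ S 0 * ∏ t ∈ range T, (1 - φ (I t)) :=
        mul_le_mul_of_nonneg_left (one_sub_sum_le_prod_one_sub _ (fun t _ => (hφ t).1)
          (fun t _ => (hφ t).2)) hS0
    _ = S T := (h.S_eq_mul_prod T).symm

end SPSystem

theorem zero_mem_stateSet {n : ℕ} {N : ℝ} (hN : 0 ≤ N) : (0 : Fin n → ℝ) ∈ stateSet n N :=
  ⟨fun _ => le_rfl, by simpa using hN⟩

namespace HypH

variable {n : ℕ} {N : ℝ} {φ : (Fin n → ℝ) → ℝ}

theorem mem_Icc (hφ : HypH n N φ) {x : Fin n → ℝ} (hx : x ∈ stateSet n N) :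
    φ x ∈ Set.Icc 0 1 :=
  ⟨(hφ.2.2.1 x hx).1, (hφ.2.2.1 x hx).2.le⟩

theorem fderiv_zero_single_nonneg (hφ : HypH n N φ) (hN : 0 ≤ N) (j : Fin n) :
    0 ≤ fderiv ℝ φ 0 (Pi.single j 1) :=
  hφ.2.2.2.1 0 (zero_mem_stateSet hN) j

theorem le_sum_fderiv_mul (hφ : HypH n N φ) (hN : 0 ≤ N) {x : Fin n → ℝ}
    (hx : x ∈ stateSet n N) : φ x ≤ ∑ j, fderiv ℝ φ 0 (Pi.single j 1) * x j := by
  obtain ⟨hC2, hφ0, -, -, -, hconc⟩ := hφ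
  have hlin : fderiv ℝ φ 0 x = ∑ j, fderiv ℝ φ 0 (Pi.single j 1) * x j := by
    conv_lhs => rw [← univ_sum_single x]
    simp only [map_sum]
    refine sum_congr rfl fun j _ => ?_
    rw [mul_comm, ← smul_eq_mul, ← map_smul, ← Pi.single_smul', smul_eq_mul, mul_one]
  have := hconc.le_add_fderiv hx (zero_mem_stateSet hN) (hC2.differentiable two_ne_zero 0)
  rwa [hφ0, zero_add, sub_zero, hlin] at this

end HypH

theorem sp_final_size_lower_bound_general
    (n : ℕ) (hn : 0 < n) (N : ℝ)
    (γ : Fin n → ℝ) (hγ : ∀ j, γ j ∈ Set.Ioo (0 : ℝ) 1)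
    (φ : (Fin n → ℝ) → ℝ) (hφ : HypH n N φ)
    (S : ℕ → ℝ) (I : ℕ → Fin n → ℝ)
    (hsys : SPSystem γ φ S I) (hic : AdmissibleIC N S I)
    (I0 : ℝ) (hI00 : I 0 ⟨0, hn⟩ = I0)
    (hI0rest : ∀ j : Fin n, j.val ≠ 0 → I 0 j = 0)
    (Sinf : ℝ) (hSinf : Filter.Tendsto S Filter.atTop (nhds Sinf))
    (δ : ℝ) (hδ : δ = ∑ j, fderiv ℝ φ 0 (Pi.single j 1) / γ j)
    (hR0 : N * δ < 1) :
    S 0 * (1 - δ * (S 0 + I0)) / (1 - δ * S 0) ≤ Sinf ∧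
    0 < S 0 * (1 - δ * (S 0 + I0)) / (1 - δ * S 0) := by
  obtain ⟨m, rfl⟩ : ∃ m, n = m + 1 := ⟨n - 1, (Nat.succ_pred_eq_of_pos hn).symm⟩
  obtain ⟨hS0, hI0, -, hN0⟩ := hic
  have hrest : ∀ k : Fin m, I 0 k.succ = 0 := fun k => hI0rest k.succ (by simp)
  have hsum0 : ∑ j, I 0 j = I0 := by simp [Fin.sum_univ_succ, hrest, ← hI00]
  have hI0nn : 0 ≤ I0 := hsum0 ▸ sum_nonneg fun j _ => hI0 j
  have hN : 0 ≤ N := by linarith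
  have hinv := hsys.nonneg_and_total_le (fun j => Set.Ioo_subset_Icc_self (hγ j))
    (fun _ => hφ.mem_Icc) hS0.le hI0 hN0
  have hmem (t : ℕ) : I t ∈ stateSet (m + 1) N :=
    ⟨(hinv t).2.1, by linarith [(hinv t).1, (hinv t).2.2]⟩
  have hr := hφ.fderiv_zero_single_nonneg hN
  have hbound := hsys.le_S_of_le_linear (fun t => hφ.mem_Icc (hmem t)) hS0.le (fun j => (hγ j).1)
    (fun t => (hinv t).2.1) hrest hr (fun t => hφ.le_sum_fderiv_mul hN (hmem t))
  rw [← hδ, show I 0 0 = I0 from hI00] at hbound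
  have hδ0 : 0 ≤ δ := hδ ▸ sum_nonneg fun j _ => div_nonneg (hr j) (hγ j).1.le
  have hnum : 0 < 1 - δ * (S 0 + I0) := by nlinarith
  have hden : 0 < 1 - δ * S 0 := by nlinarith
  refine ⟨ge_of_tendsto' hSinf fun T => ?_, div_pos (mul_pos hS0 hnum) hden⟩
  rw [div_le_iff₀ hden]
  linear_combination hbound T

/-- final size lower bound: if `R₀ = Nδ < 1` and all initial infected
individuals are in the first class, `I(0) = (I⁰,0,…,0)` with `I⁰ > 0`, then
`S∞ ≥ S(0)(1 − δ(S(0)+I⁰))/(1 − δS(0)) > 0`. -/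
theorem sp_final_size_lower_bound
    (n : ℕ) (hn : 0 < n) (N : ℝ) (hN : 0 < N)
    (γ : Fin n → ℝ) (hγ : ∀ j, γ j ∈ Set.Ioo (0 : ℝ) 1)
    (φ : (Fin n → ℝ) → ℝ) (hφ : HypH n N φ)
    (S : ℕ → ℝ) (I : ℕ → Fin n → ℝ)
    (hsys : SPSystem γ φ S I) (hic : AdmissibleIC N S I)
    (I0 : ℝ) (hI00 : I 0 ⟨0, hn⟩ = I0) (hI0pos : 0 < I0)
    (hI0rest : ∀ j : Fin n, j.val ≠ 0 → I 0 j = 0)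
    (Sinf : ℝ) (hSinf : Filter.Tendsto S Filter.atTop (nhds Sinf))
    (δ : ℝ) (hδ : δ = ∑ j, fderiv ℝ φ 0 (Pi.single j 1) / γ j)
    (hR0 : N * δ < 1) :
    S 0 * (1 - δ * (S 0 + I0)) / (1 - δ * S 0) ≤ Sinf ∧
    0 < S 0 * (1 - δ * (S 0 + I0)) / (1 - δ * S 0) :=
  sp_final_size_lower_bound_general n hn N γ hγ φ hφ S I hsys hic I0 hI00 hI0rest Sinf hSinf δ hδ
    hR0
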